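/- Let (L_n) be a nonnegative real sequence satisfying, for all n ≥ 1, L_{n+1} ≤ (1 - e/(n+1)) L_n + A (√(n log n) + log n + 1)/(n(n+1)) for constants 1/2 < e ≤ 1 and A > 0. Then L_n² = O(log(n)/n) as n → ∞; more precisely there is a constant C (depending on L_1, A, e) with L_n ≤ C √(log(n)/n) for all n ≥ 2. -/

import Mathlib

open Real

set_option maxHeartbeats 1600000 in
theorem recursion_rate_log_over_n
    (L : ℕ → ℝ) (e A : ℝ) (he : 1 / 2 < e) (he1 : e ≤ 1) (hA : 0 < A)
    (hpos : ∀ n, 0 ≤ L n)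
    (hrec : ∀ n : ℕ, 1 ≤ n →
      L (n + 1) ≤ (1 - e / (n + 1)) * L n
        + A * (Real.sqrt (n * Real.log n) + Real.log n + 1) / (n * (n + 1))) :
    ∃ C : ℝ, ∀ n : ℕ, 2 ≤ n → L n ≤ C * Real.sqrt (Real.log n / n) := by
  set ε : ℝ := 2 * e - 1 with hεdef
  have hε : 0 < ε := by simp only [hεdef]; linarith
  set n0 : ℕ := max 2 ⌈2 / ε⌉₊ with hn0def
  have hn0two : 2 ≤ n0 := le_max_left _ _
  have hne : (Finset.Icc 2 n0).Nonempty := ⟨2, by simp [hn0two]⟩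
  set C0 : ℝ := (Finset.Icc 2 n0).sup' hne (fun k => L k / Real.sqrt (Real.log k / k)) with hC0
  set C : ℝ := max C0 (24 * A / ε) with hC
  have hCpos : 0 < C := lt_of_lt_of_le (by positivity) (le_max_right _ _)
  have hsq : ∀ k : ℕ, 2 ≤ k → 0 < Real.sqrt (Real.log k / k) := by
    intro k hk
    have hk2 : (2:ℝ) ≤ (k:ℝ) := by exact_mod_cast hk
    have hlk : 0 < Real.log k := Real.log_pos (by linarith)
    have hk0 : (0:ℝ) < k := by linarith
    positivity
  have hfin : ∀ k ∈ Finset.Icc 2 n0, L k ≤ C * Real.sqrt (Real.log k / k) := by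
    intro k hk
    have hk2 : 2 ≤ k := (Finset.mem_Icc.mp hk).1
    have h1 : L k / Real.sqrt (Real.log k / k) ≤ C0 :=
      Finset.le_sup' (fun k => L k / Real.sqrt (Real.log k / k)) hk
    have h2 := hsq k hk2
    have hC0C : C0 ≤ C := le_max_left _ _
    calc L k = L k / Real.sqrt (Real.log k / k) * Real.sqrt (Real.log k / k) :=
          (div_mul_cancel₀ (L k) h2.ne').symm
      _ ≤ C0 * Real.sqrt (Real.log k / k) := mul_le_mul_of_nonneg_right h1 h2.le
      _ ≤ C * Real.sqrt (Real.log k / k) := mul_le_mul_of_nonneg_right hC0C h2.le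
  clear_value C0 C ε
  refine ⟨C, ?_⟩
  have main : ∀ n : ℕ, n0 ≤ n → L n ≤ C * Real.sqrt (Real.log n / n) := by
    intro n hn
    induction n, hn using Nat.le_induction with
    | base => exact hfin n0 (by simp [hn0two])
    | succ n hn ih =>
      push_cast
      have hrecn := hrec n (by omega)
      have hn2 : 2 ≤ n := le_trans hn0two hn
      have hceil : ⌈2/ε⌉₊ ≤ n := le_trans (le_max_right _ _) hn
      have hN2 : (2:ℝ) ≤ (n:ℝ) := by exact_mod_cast hn2
      have ht := hsq n hn2
      clear hrec hpos hfin hsq hC0 hne hn0def hn hn0two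
      clear n0
      set N := (n:ℝ) with hNdef
      have hN : (0:ℝ) < N := by linarith
      have hN1 : (0:ℝ) < N + 1 := by linarith
      have hεN : 2 ≤ ε * N := by
        have h2 : 2/ε ≤ N := Nat.ceil_le.mp hceil
        rw [div_le_iff₀ hε] at h2; linarith
      clear hceil
      have hlog : 0 < Real.log N := Real.log_pos (by linarith)
      set t := Real.sqrt (Real.log N / N) with htdef
      set s := Real.sqrt (Real.log (N+1) / (N+1)) with hsdef
      set ρ := Real.sqrt ((N+1)/N) with hρdef
      set a : ℝ := 1 - e/(N+1) with hadef
      clear_value N t s ρ a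
      have hs0 : 0 ≤ s := by rw [hsdef]; exact Real.sqrt_nonneg _
      have ht0 : 0 ≤ t := by rw [htdef]; exact Real.sqrt_nonneg _
      -- bound on the noise term
      have hlsq : Real.log N ≤ Real.sqrt (N * Real.log N) := by
        have h1 : Real.log N ≤ N := (Real.log_le_sub_one_of_pos hN).trans (by linarith)
        have h2 : Real.log N = Real.sqrt ((Real.log N)^2) := (Real.sqrt_sq hlog.le).symm
        rw [h2]
        apply Real.sqrt_le_sqrt; nlinarith
      have h1s : (1:ℝ) ≤ Real.sqrt (N * Real.log N) := by
        rw [show (1:ℝ) = Real.sqrt 1 by simp]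
        apply Real.sqrt_le_sqrt
        have hl2 : Real.log 2 ≤ Real.log N := Real.log_le_log (by norm_num) hN2
        have hld : (0.6931471803:ℝ) < Real.log 2 := Real.log_two_gt_d9
        nlinarith
      have h2 : Real.sqrt (N * Real.log N) = N * t := by
        have hfact : N * Real.log N = N^2 * (Real.log N / N) := by field_simp
        rw [htdef, hfact, Real.sqrt_mul (sq_nonneg N), Real.sqrt_sq hN.le]
      -- comparison of sqrt(log n / n) across a step
      have hρ0 : 0 ≤ ρ := by rw [hρdef]; exact Real.sqrt_nonneg _
      have h3 : t ≤ ρ * s := by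
        rw [hρdef, hsdef, htdef, ← Real.sqrt_mul (by positivity)]
        apply Real.sqrt_le_sqrt
        have hmono : Real.log N ≤ Real.log (N+1) := Real.log_le_log hN (by linarith)
        rw [show (N+1)/N * (Real.log (N+1)/(N+1)) = Real.log (N+1)/N by field_simp]
        gcongr
      have hρ1 : ρ ≤ 1 + 1/(2*N) := by
        rw [hρdef, show (1 + 1/(2*N)) = Real.sqrt ((1+1/(2*N))^2) from
          (Real.sqrt_sq (by positivity)).symm]
        apply Real.sqrt_le_sqrt
        rw [div_le_iff₀ hN]
        have hu : 1/(2*N)*(2*N) = 1 := by field_simp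
        nlinarith [mul_nonneg (mul_self_nonneg (1/(2*N))) hN.le]
      have hρ2 : ρ ≤ 2 := by
        have : 1/(2*N) ≤ 1 := by rw [div_le_one (by linarith)]; linarith
        linarith
      -- coefficient bound
      have ha : 0 ≤ a := by
        have : e/(N+1) ≤ 1 := by rw [div_le_one hN1]; linarith
        simp only [hadef]; linarith
      have hcoef : a * (1 + 1/(2*N)) ≤ 1 - ε/(4*(N+1)) := by
        have hnum : 2*(N + 1 - 2*e*N - e) + ε*N ≤ 0 := by
          have hεe : ε * N = 2*e*N - N := by rw [hεdef]; ring
          linarith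
        have heq : a * (1 + 1/(2*N)) - (1 - ε/(4*(N+1)))
            = (2*(N + 1 - 2*e*N - e) + ε*N) / (4*N*(N+1)) := by
          simp only [hadef]; field_simp; ring
        have hd : (2*(N + 1 - 2*e*N - e) + ε*N) / (4*N*(N+1)) ≤ 0 :=
          div_nonpos_of_nonpos_of_nonneg hnum (by positivity)
        linarith
      have hCε : 24 * A ≤ ε * C := by
        have h0 : 24 * A / ε ≤ C := by rw [hC]; exact le_max_right _ _
        rw [div_le_iff₀ hε] at h0; linarith
      -- chain of inequalities
      have hb1 : A * (Real.sqrt (N * Real.log N) + Real.log N + 1) / (N*(N+1))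
          ≤ 3 * A * t / (N+1) := by
        have hx : Real.sqrt (N * Real.log N) + Real.log N + 1 ≤ 3 * (N * t) := by
          rw [← h2]; linarith
        have hstep : A * (Real.sqrt (N * Real.log N) + Real.log N + 1) / (N*(N+1))
            ≤ A * (3 * (N * t)) / (N*(N+1)) := by gcongr
        have heq : A * (3 * (N * t)) / (N*(N+1)) = 3 * A * t / (N+1) := by
          field_simp
        linarith
      have step2 : L (n+1) ≤ a * (C * t) + 3 * A * t / (N+1) := by
        have h5 : a * L n ≤ a * (C * t) := mul_le_mul_of_nonneg_left ih ha
        linarith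
      have step3 : a * (C * t) + 3 * A * t / (N+1) ≤ a * (C * (ρ * s)) + 3 * A * (ρ * s) / (N+1) := by
        have hts : C * t ≤ C * (ρ * s) := mul_le_mul_of_nonneg_left h3 hCpos.le
        have hts2 : 3 * A * t ≤ 3 * A * (ρ * s) :=
          mul_le_mul_of_nonneg_left h3 (by positivity)
        exact add_le_add (mul_le_mul_of_nonneg_left hts ha)
          (div_le_div_of_nonneg_right hts2 hN1.le)
      have step4 : a * (C * (ρ * s)) + 3 * A * (ρ * s) / (N+1)
          ≤ (1 - ε/(4*(N+1))) * (C * s) + 6 * A * s / (N+1) := by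
        have haρ : a * ρ ≤ 1 - ε/(4*(N+1)) := by
          have := mul_le_mul_of_nonneg_left hρ1 ha
          linarith
        have h6 : a * (C * (ρ * s)) ≤ (1 - ε/(4*(N+1))) * (C * s) := by
          have hCs : 0 ≤ C * s := mul_nonneg hCpos.le hs0
          calc a * (C * (ρ * s)) = (a * ρ) * (C * s) := by ring
            _ ≤ (1 - ε/(4*(N+1))) * (C * s) := mul_le_mul_of_nonneg_right haρ hCs
        have h7 : 3 * A * (ρ * s) / (N+1) ≤ 6 * A * s / (N+1) := by
          apply div_le_div_of_nonneg_right _ hN1.le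
          have h8 : 3 * A * ρ ≤ 6 * A := by
            have := mul_le_mul_of_nonneg_left hρ2 (show (0:ℝ) ≤ 3 * A by positivity)
            linarith
          calc 3 * A * (ρ * s) = (3 * A * ρ) * s := by ring
            _ ≤ 6 * A * s := mul_le_mul_of_nonneg_right h8 hs0
        linarith
      have step5 : (1 - ε/(4*(N+1))) * (C * s) + 6 * A * s / (N+1) ≤ C * s := by
        have h0 : 0 ≤ (ε*C - 24*A) * s / (4*(N+1)) :=
          div_nonneg (mul_nonneg (by linarith) hs0) (by linarith)
        have heq : C*s - ((1 - ε/(4*(N+1))) * (C*s) + 6*A*s/(N+1))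
            = (ε*C - 24*A)*s/(4*(N+1)) := by
          field_simp; ring
        linarith
      calc L (n+1) ≤ a * (C * t) + 3 * A * t / (N+1) := step2
        _ ≤ a * (C * (ρ * s)) + 3 * A * (ρ * s) / (N+1) := step3
        _ ≤ (1 - ε/(4*(N+1))) * (C * s) + 6 * A * s / (N+1) := step4
        _ ≤ C * s := step5
  intro n hn
  rcases le_or_gt n n0 with h | h
  · exact hfin n (Finset.mem_Icc.mpr ⟨hn, h⟩)
  · exact main n h.le
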